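/- Let Ω ⊂ ℝ be a measurable set, σ > 0, β ∈ ℝ, and M₀, M_V ≥ 0. Let V : Ω → ℝ be measurable with |V(x)| ≤ M_V for almost every x ∈ Ω, and let v, w : Ω → ℂ be measurable with |v(x)| ≤ M₀ and |w(x)| ≤ M₀ for almost every x ∈ Ω. Define B(u)(x) = V(x)u(x) + β|u(x)|^{2σ}u(x). Then (∫_Ω |B(v)(x) − B(w)(x)|² dx)^{1/2} ≤ (M_V + (1 + 2σ)|β|M₀^{2σ}) · (∫_Ω |v(x) − w(x)|² dx)^{1/2}. -/

import Mathlib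

open MeasureTheory

private lemma young_aux {p x y : ℝ} (hp : 0 < p) (hy : 0 ≤ y) (hxy : y ≤ x) :
    (x ^ p - y ^ p) * y ≤ p * x ^ p * (x - y) := by
  rcases eq_or_lt_of_le hy with h0 | h0
  · rw [← h0]
    have hx : 0 ≤ x := le_trans hy hxy
    have h1 : 0 ≤ x ^ p := Real.rpow_nonneg hx p
    have h2 : (0:ℝ) ^ p = 0 := Real.zero_rpow hp.ne'
    rw [h2]
    nlinarith [mul_nonneg (mul_nonneg hp.le h1) hx]
  · have hx : 0 < x := lt_of_lt_of_le h0 hxy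
    have hpq : ((p + 1) / p).HolderConjugate (p + 1) := by
      constructor
      · have : p + 1 ≠ 0 := by linarith
        field_simp
      · positivity
      · linarith
    have hY := Real.young_inequality_of_nonneg (Real.rpow_nonneg hx.le p) hy hpq
    have e1 : (x ^ p) ^ ((p + 1) / p) = x ^ (p + 1) := by
      rw [← Real.rpow_mul hx.le]
      congr 1
      field_simp
    rw [e1, Real.rpow_add_one hx.ne' p, Real.rpow_add_one h0.ne' p] at hY
    have hp1 : (0:ℝ) < p + 1 := by linarith
    have hY' : (p + 1) * (x ^ p * y) ≤ p * (x ^ p * x) + y ^ p * y := by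
      have h2 : (x ^ p * x) / ((p + 1) / p) = p * (x ^ p * x) / (p + 1) := by
        field_simp
      rw [h2, ← add_div] at hY
      rw [le_div_iff₀ hp1] at hY
      linarith [hY]
    nlinarith

private lemma pw_ordered {p M : ℝ} (hp : 0 < p) (a b : ℂ)
    (hba : ‖b‖ ≤ ‖a‖) (ha : ‖a‖ ≤ M) :
    ‖((‖a‖ ^ p : ℝ) : ℂ) * a - ((‖b‖ ^ p : ℝ) : ℂ) * b‖
      ≤ (1 + p) * M ^ p * ‖a - b‖ := by
  set A := ‖a‖ with hA
  set B := ‖b‖ with hB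
  have hA0 : 0 ≤ A := norm_nonneg a
  have hB0 : 0 ≤ B := norm_nonneg b
  have hM0 : 0 ≤ M := le_trans hA0 ha
  have key : ((A ^ p : ℝ) : ℂ) * a - ((B ^ p : ℝ) : ℂ) * b
      = ((A ^ p : ℝ) : ℂ) * (a - b) + (((A ^ p - B ^ p : ℝ)) : ℂ) * b := by
    push_cast
    ring
  rw [key]
  have hABp : B ^ p ≤ A ^ p := Real.rpow_le_rpow hB0 hba hp.le
  have h1 : ‖((A ^ p : ℝ) : ℂ) * (a - b)‖ = A ^ p * ‖a - b‖ := by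
    rw [norm_mul, Complex.norm_real, Real.norm_eq_abs, abs_of_nonneg (Real.rpow_nonneg hA0 p)]
  have h2 : ‖(((A ^ p - B ^ p : ℝ)) : ℂ) * b‖ = (A ^ p - B ^ p) * B := by
    rw [norm_mul, Complex.norm_real, Real.norm_eq_abs, abs_of_nonneg (by linarith)]
  calc ‖((A ^ p : ℝ) : ℂ) * (a - b) + (((A ^ p - B ^ p : ℝ)) : ℂ) * b‖
      ≤ A ^ p * ‖a - b‖ + (A ^ p - B ^ p) * B := by
        rw [← h1, ← h2]; exact norm_add_le _ _
    _ ≤ A ^ p * ‖a - b‖ + p * A ^ p * (A - B) := by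
        linarith [young_aux hp hB0 hba]
    _ ≤ A ^ p * ‖a - b‖ + p * A ^ p * ‖a - b‖ := by
        have hsub : A - B ≤ ‖a - b‖ := by
          simpa [hA, hB] using norm_sub_norm_le a b
        have : 0 ≤ p * A ^ p := mul_nonneg hp.le (Real.rpow_nonneg hA0 p)
        nlinarith
    _ = (1 + p) * A ^ p * ‖a - b‖ := by ring
    _ ≤ (1 + p) * M ^ p * ‖a - b‖ := by
        have : A ^ p ≤ M ^ p := Real.rpow_le_rpow hA0 ha hp.le
        have h0 : 0 ≤ ‖a - b‖ := norm_nonneg _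
        have h1p : (0:ℝ) ≤ 1 + p := by linarith
        nlinarith [mul_le_mul_of_nonneg_left this h1p]

private lemma pw {p M : ℝ} (hp : 0 < p) (a b : ℂ)
    (ha : ‖a‖ ≤ M) (hb : ‖b‖ ≤ M) :
    ‖((‖a‖ ^ p : ℝ) : ℂ) * a - ((‖b‖ ^ p : ℝ) : ℂ) * b‖
      ≤ (1 + p) * M ^ p * ‖a - b‖ := by
  rcases le_total (‖b‖) (‖a‖) with h | h
  · exact pw_ordered hp a b h ha
  · have := pw_ordered hp b a h hb
    calc ‖((‖a‖ ^ p : ℝ) : ℂ) * a - ((‖b‖ ^ p : ℝ) : ℂ) * b‖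
        = ‖((‖b‖ ^ p : ℝ) : ℂ) * b - ((‖a‖ ^ p : ℝ) : ℂ) * a‖ := by
          rw [← norm_neg]; ring_nf
      _ ≤ (1 + p) * M ^ p * ‖b - a‖ := this
      _ = (1 + p) * M ^ p * ‖a - b‖ := by
          rw [← norm_neg (b - a)]; ring_nf

/-- Lemma 3.4 of the paper: `L²`-Lipschitz property of `B(u) = Vu + β|u|^{2σ}u` on
`L^∞`-balls, with explicit constant `M_V + (1+2σ)|β|M₀^{2σ}`. -/
theorem stmt_12 (Ω : Set ℝ) (hΩ : MeasurableSet Ω) (σ β M₀ M_V : ℝ)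
    (hσ : 0 < σ) (hM₀ : 0 ≤ M₀) (hMV : 0 ≤ M_V)
    (V : ℝ → ℝ) (hVmeas : Measurable V)
    (v w : ℝ → ℂ) (hvmeas : Measurable v) (hwmeas : Measurable w)
    (hV : ∀ᵐ x ∂(volume.restrict Ω), |V x| ≤ M_V)
    (hv : ∀ᵐ x ∂(volume.restrict Ω), ‖v x‖ ≤ M₀)
    (hw : ∀ᵐ x ∂(volume.restrict Ω), ‖w x‖ ≤ M₀) :
    (∫⁻ x in Ω, ENNReal.ofReal (‖((V x : ℂ) * v x + (β : ℂ) * ((‖v x‖ ^ (2 * σ) : ℝ) : ℂ) * v x)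
          - ((V x : ℂ) * w x + (β : ℂ) * ((‖w x‖ ^ (2 * σ) : ℝ) : ℂ) * w x)‖ ^ 2)) ^ (1/2 : ℝ)
      ≤ ENNReal.ofReal (M_V + (1 + 2 * σ) * |β| * M₀ ^ (2 * σ))
        * (∫⁻ x in Ω, ENNReal.ofReal (‖v x - w x‖ ^ 2)) ^ (1/2 : ℝ) := by
  set C : ℝ := M_V + (1 + 2 * σ) * |β| * M₀ ^ (2 * σ) with hC
  have hp : 0 < 2 * σ := by linarith
  have hC0 : 0 ≤ C := by
    have : 0 ≤ (1 + 2 * σ) * |β| * M₀ ^ (2 * σ) := by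
      have := Real.rpow_nonneg hM₀ (2 * σ)
      positivity
    linarith
  -- pointwise a.e. bound
  have hpt : ∀ᵐ x ∂(volume.restrict Ω),
      ENNReal.ofReal (‖((V x : ℂ) * v x + (β : ℂ) * ((‖v x‖ ^ (2 * σ) : ℝ) : ℂ) * v x)
          - ((V x : ℂ) * w x + (β : ℂ) * ((‖w x‖ ^ (2 * σ) : ℝ) : ℂ) * w x)‖ ^ 2)
      ≤ ENNReal.ofReal (C ^ 2) * ENNReal.ofReal (‖v x - w x‖ ^ 2) := by
    filter_upwards [hV, hv, hw] with x hVx hvx hwx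
    have key : ‖((V x : ℂ) * v x + (β : ℂ) * ((‖v x‖ ^ (2 * σ) : ℝ) : ℂ) * v x)
          - ((V x : ℂ) * w x + (β : ℂ) * ((‖w x‖ ^ (2 * σ) : ℝ) : ℂ) * w x)‖
        ≤ C * ‖v x - w x‖ := by
      have hsplit : ((V x : ℂ) * v x + (β : ℂ) * ((‖v x‖ ^ (2 * σ) : ℝ) : ℂ) * v x)
          - ((V x : ℂ) * w x + (β : ℂ) * ((‖w x‖ ^ (2 * σ) : ℝ) : ℂ) * w x)
          = (V x : ℂ) * (v x - w x)
            + (β : ℂ) * (((‖v x‖ ^ (2 * σ) : ℝ) : ℂ) * v x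
              - ((‖w x‖ ^ (2 * σ) : ℝ) : ℂ) * w x) := by ring
      rw [hsplit]
      have h1 : ‖(V x : ℂ) * (v x - w x)‖ ≤ M_V * ‖v x - w x‖ := by
        rw [norm_mul, Complex.norm_real, Real.norm_eq_abs]
        exact mul_le_mul_of_nonneg_right hVx (norm_nonneg _)
      have h2 : ‖(β : ℂ) * (((‖v x‖ ^ (2 * σ) : ℝ) : ℂ) * v x
              - ((‖w x‖ ^ (2 * σ) : ℝ) : ℂ) * w x)‖
          ≤ |β| * ((1 + 2 * σ) * M₀ ^ (2 * σ) * ‖v x - w x‖) := by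
        rw [norm_mul, Complex.norm_real, Real.norm_eq_abs]
        exact mul_le_mul_of_nonneg_left (pw hp (v x) (w x) hvx hwx) (abs_nonneg β)
      calc ‖_‖ ≤ _ + _ := norm_add_le _ _
        _ ≤ M_V * ‖v x - w x‖
            + |β| * ((1 + 2 * σ) * M₀ ^ (2 * σ) * ‖v x - w x‖) := add_le_add h1 h2
        _ = C * ‖v x - w x‖ := by rw [hC]; ring
    rw [← ENNReal.ofReal_mul (by positivity)]
    apply ENNReal.ofReal_le_ofReal
    have h0 : 0 ≤ ‖v x - w x‖ := norm_nonneg _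
    have habs : 0 ≤ ‖((V x : ℂ) * v x + (β : ℂ) * ((‖v x‖ ^ (2 * σ) : ℝ) : ℂ) * v x)
          - ((V x : ℂ) * w x + (β : ℂ) * ((‖w x‖ ^ (2 * σ) : ℝ) : ℂ) * w x)‖ :=
      norm_nonneg _
    calc ‖_‖ ^ 2 ≤ (C * ‖v x - w x‖) ^ 2 := by
          exact pow_le_pow_left₀ habs key 2
      _ = C ^ 2 * ‖v x - w x‖ ^ 2 := by ring
  -- integrate
  have hint : (∫⁻ x in Ω, ENNReal.ofReal (‖((V x : ℂ) * v x + (β : ℂ) * ((‖v x‖ ^ (2 * σ) : ℝ) : ℂ) * v x)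
          - ((V x : ℂ) * w x + (β : ℂ) * ((‖w x‖ ^ (2 * σ) : ℝ) : ℂ) * w x)‖ ^ 2))
      ≤ ENNReal.ofReal (C ^ 2) * ∫⁻ x in Ω, ENNReal.ofReal (‖v x - w x‖ ^ 2) := by
    calc _ ≤ ∫⁻ x in Ω, ENNReal.ofReal (C ^ 2) * ENNReal.ofReal (‖v x - w x‖ ^ 2) :=
          lintegral_mono_ae hpt
      _ = ENNReal.ofReal (C ^ 2) * ∫⁻ x in Ω, ENNReal.ofReal (‖v x - w x‖ ^ 2) :=
          lintegral_const_mul' _ _ ENNReal.ofReal_ne_top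
  have := ENNReal.rpow_le_rpow hint (by norm_num : (0:ℝ) ≤ 1/2)
  refine le_trans this ?_
  rw [ENNReal.mul_rpow_of_nonneg _ _ (by norm_num : (0:ℝ) ≤ 1/2)]
  apply mul_le_mul_of_nonneg_right ?_ zero_le
  rw [ENNReal.ofReal_pow hC0, ← ENNReal.rpow_natCast (ENNReal.ofReal C) 2,
    ← ENNReal.rpow_mul]
  norm_num
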